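/- Consider three non-collinear points B, D, T in the plane and a point U strictly outside the closed triangle BDT. Then there exists a point U' on the boundary of the triangle such that ‖U' − B‖ ≤ ‖U − B‖, ‖U' − D‖ ≤ ‖U − D‖, and ‖U' − T‖ ≤ ‖U − T‖, with at least one inequality strict. -/

import Mathlib

open scoped RealInnerProductSpace

section NearestPoint

variable {E : Type*} [NormedAddCommGroup E] [InnerProductSpace ℝ E]

theorem dist_lt_dist_of_inner_sub_nonpos {u v w : E} (huv : u ≠ v)
    (h : ⟪u - v, w - v⟫ ≤ 0) : dist v w < dist u w := by
  have hexpand : ‖u - w‖ ^ 2 = ‖u - v‖ ^ 2 - 2 * ⟪u - v, w - v⟫ + ‖w - v‖ ^ 2 := by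
    rw [← norm_sub_sq_real, sub_sub_sub_cancel_right]
  have hpos : 0 < ‖u - v‖ := norm_pos_iff.mpr (sub_ne_zero.mpr huv)
  rw [dist_eq_norm, dist_eq_norm, norm_sub_rev v w]
  exact lt_of_pow_lt_pow_left₀ 2 (norm_nonneg _) (by nlinarith)

/-- The witness is a point of `K` nearest to `u`: it lies on the boundary, and the angle at it
between `u` and any point of `K` is obtuse. -/
theorem Convex.exists_mem_frontier_forall_dist_lt [FiniteDimensional ℝ E] {K : Set E}
    (hK : Convex ℝ K) (hKc : IsClosed K) (hne : K.Nonempty) {u : E} (hu : u ∉ K) :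
    ∃ v ∈ frontier K, ∀ w ∈ K, dist v w < dist u w := by
  obtain ⟨v, hvfr, hvdist⟩ :=
    exists_mem_frontier_infDist_compl_eq_dist (s := Kᶜ) hu (Set.compl_ne_univ.mpr hne)
  rw [frontier_compl] at hvfr
  rw [compl_compl] at hvdist
  have hvK : v ∈ K := hKc.frontier_subset hvfr
  have hnearest : ‖u - v‖ = ⨅ w : K, ‖u - w‖ := by
    simpa only [Metric.infDist_eq_iInf, dist_eq_norm] using hvdist.symm
  have hobtuse := (norm_eq_iInf_iff_real_inner_le_zero hK hvK).mp hnearest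
  exact ⟨v, hvfr, fun w hw =>
    dist_lt_dist_of_inner_sub_nonpos (ne_of_mem_of_not_mem hvK hu).symm (hobtuse w hw)⟩

end NearestPoint

theorem stmt_15_general (B D T U : EuclideanSpace ℝ (Fin 2))
    (hU : U ∉ convexHull ℝ ({B, D, T} : Set (EuclideanSpace ℝ (Fin 2)))) :
    ∃ U' ∈ frontier (convexHull ℝ ({B, D, T} : Set (EuclideanSpace ℝ (Fin 2)))),
      dist U' B ≤ dist U B ∧ dist U' D ≤ dist U D ∧ dist U' T ≤ dist U T ∧
      (dist U' B < dist U B ∨ dist U' D < dist U D ∨ dist U' T < dist U T) := by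
  set K := convexHull ℝ ({B, D, T} : Set (EuclideanSpace ℝ (Fin 2)))
  have hvertex : ∀ P ∈ ({B, D, T} : Set _), P ∈ K := fun P hP => subset_convexHull ℝ _ hP
  obtain ⟨U', hfr, hcloser⟩ := (convex_convexHull ℝ _).exists_mem_frontier_forall_dist_lt
    ((Set.toFinite _).isCompact_convexHull ℝ).isClosed ⟨B, hvertex B (by simp)⟩ hU
  have hB := hcloser B (hvertex B (by simp))
  have hD := hcloser D (hvertex D (by simp))
  have hT := hcloser T (hvertex T (by simp))
  exact ⟨U', hfr, hB.le, hD.le, hT.le, Or.inl hB⟩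

theorem stmt_15 (B D T U : EuclideanSpace ℝ (Fin 2))
    (hncol : AffineIndependent ℝ ![B, D, T])
    (hU : U ∉ convexHull ℝ ({B, D, T} : Set (EuclideanSpace ℝ (Fin 2)))) :
    ∃ U' ∈ frontier (convexHull ℝ ({B, D, T} : Set (EuclideanSpace ℝ (Fin 2)))),
      dist U' B ≤ dist U B ∧ dist U' D ≤ dist U D ∧ dist U' T ≤ dist U T ∧
      (dist U' B < dist U B ∨ dist U' D < dist U D ∨ dist U' T < dist U T) :=
  stmt_15_general B D T U hU
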